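/- Let (M,U_M) and (N,U_N) be cells of Schurian representations of Q such that Hom(M(λ),N(μ)) = 0 for all (λ,μ) ∈ U_M × U_N, and let U_{N,M} ⊆ R(N,M) be a linear subspace which is universal for (U_M,U_N) (i.e. π_{N(μ),M(λ)} is injective on U_{N,M} for all (λ,μ) ∈ U_M × U_N), with basis {e_1, …, e_n}. Fix 1 ≤ d ≤ n and let (f_1, …, f_d) be the standard basis of k^d. For each strictly increasing sequence I = (i_1 < … < i_d) in {1,…,n}, let B_I be the middle term of the extension of N by M ⊗ k^d determined by Σ_{j=1}^d e_{i_j} ⊗ f_j, and let A_I := { Σ_{j=1}^d Σ_{k=1}^{i_j − 1} a_{j,k}·(e_k ⊗ f_j) : a_{j,k} ∈ k, with a_{l,i_k} = 0 for all k,l } ⊆ U_{N,M} ⊗ k^d (the Schubert cell). Then for each I, the set of parameters { (τ, λ ⊗ id_{k^d}, μ) : τ ∈ A_I, λ ∈ U_M, μ ∈ U_N } defines a cell of indecomposable representations C_I = (B_I, {(τ, λ⊗id, μ)}) of dimension vector d·(dim M) + dim N: every representation B_I(τ, λ⊗id_{k^d}, μ) (the representation with underlying spaces (M⊗k^d)_q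 ⊕ N_q and arrow maps [[(M(λ)⊗k^d)_a, (Σ_j e_{i_j}⊗f_j + τ)_a],[0, N(μ)_a]]) is indecomposable; two such representations are isomorphic only if their parameters agree; dim C_I = dim U_M + dim U_N + dim A_I; and the collection {C_I}_I over all strictly increasing sequences I is a mosaic of indecomposable representations, i.e. B_I(τ,λ⊗id,μ) ≅ B_{I'}(τ',λ'⊗id,μ') implies I = I'. -/

import Mathlib

/-!
A morphism between two middle terms `B_I = [[M(λ) ⊗ k^d, E_I + τ], [0, N(μ)]]` has no
lower-left block since `Hom(M(λ), N(μ)) = 0`, so its diagonal blocks are a matrix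
`C ∈ End(M(λ) ⊗ k^d) = M_d(k)` and a scalar `c ∈ End(N(μ)) = k`. Comparing extension classes,
`C (E_I + τ) - c (E_I' + τ')` is a coboundary in `U_{N,M} ⊗ k^d`, hence zero by universality; in
the basis `e` this reads `C P = c P'` for the Schubert normal forms `P, P'` of `E_I + τ, E_I' + τ'`.
For an isomorphism `c ≠ 0`, and the normal form forces `I = I'`, `C = c` and `P = P'`. For an
idempotent endomorphism it gives the shape `c + (square-zero)`, hence `0` or `1`: the middle terms
are indecomposable. Finally an isomorphism of middle terms restricts to `M(λ)^d ≅ M(λ')^d` and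
`N(μ) ≅ N(μ')`, so `λ = λ'` and `μ = μ'` by separation, after cancelling the exponent `d` using
`End M(λ) = k`.
-/

namespace QuivRep

variable (k : Type) [Field k] {V A : Type} (s t : A → V)

/-- `RSp k s t X Y` is R(N,M) = ⊕_{a∈Q_1} Hom_k(N_{s(a)}, M_{t(a)}) where the
representation `N` has vertex spaces `X` and `M` has vertex spaces `Y`. -/
abbrev RSp (X Y : V → Type) [∀ q, AddCommGroup (X q)] [∀ q, Module k (X q)]
    [∀ q, AddCommGroup (Y q)] [∀ q, Module k (Y q)] : Type :=
  ∀ a : A, X (s a) →ₗ[k] Y (t a)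

variable {X Y : V → Type}
  [∀ q, AddCommGroup (X q)] [∀ q, Module k (X q)]
  [∀ q, AddCommGroup (Y q)] [∀ q, Module k (Y q)]

/-- The linear map `d_{N,M}` whose cokernel is Ext(N,M). Here `Nm` are the arrow
maps of `N` (on spaces `X`) and `Mm` those of `M` (on spaces `Y`). -/
def dMap (Nm : RSp k s t X X) (Mm : RSp k s t Y Y) :
    (∀ q, X q →ₗ[k] Y q) →ₗ[k] RSp k s t X Y where
  toFun f := fun a => (f (t a)).comp (Nm a) - (Mm a).comp (f (s a))
  map_add' f g := by
    funext a; ext x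
    simp only [Pi.add_apply, LinearMap.add_comp, LinearMap.comp_add, LinearMap.sub_apply,
      LinearMap.add_apply, LinearMap.comp_apply]
    abel
  map_smul' c f := by
    funext a; ext x
    simp [smul_sub]

/-- `f : M → N` is a morphism of representations (`M` on spaces `X`, `N` on spaces `Y`). -/
def IsRHom (Mm : RSp k s t X X) (Nm : RSp k s t Y Y) (f : ∀ q, X q →ₗ[k] Y q) : Prop :=
  ∀ a, (f (t a)).comp (Mm a) = (Nm a).comp (f (s a))

/-- Isomorphism of representations. -/
def RIso (Mm : RSp k s t X X) (Nm : RSp k s t Y Y) : Prop :=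
  ∃ f : ∀ q, X q →ₗ[k] Y q, IsRHom k s t Mm Nm f ∧ ∀ q, Function.Bijective (f q)

/-- A family of submodules is a subrepresentation. -/
def IsSubRep (Mm : RSp k s t X X) (U : ∀ q, Submodule k (X q)) : Prop :=
  ∀ a, ∀ x ∈ U (s a), Mm a x ∈ U (t a)

/-- Indecomposability: nonzero, and no nontrivial internal direct sum decomposition. -/
def Indec (Mm : RSp k s t X X) : Prop :=
  (∃ q, ∃ x : X q, x ≠ 0) ∧
  ∀ U W : ∀ q, Submodule k (X q), IsSubRep k s t Mm U → IsSubRep k s t Mm W →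
    (∀ q, U q ⊓ W q = ⊥) → (∀ q, U q ⊔ W q = ⊤) →
    (∀ q, U q = ⊥) ∨ (∀ q, W q = ⊥)

/-- The middle term `B(f,λ,μ)` of the extension determined by `f ∈ R(N,M)`:
vertex spaces `Y q × X q`, arrow maps `[[Mm, f],[0, Nm]]`. -/
def BExt (Mm : RSp k s t Y Y) (Nm : RSp k s t X X) (f : RSp k s t X Y) :
    RSp k s t (fun q => Y q × X q) (fun q => Y q × X q) :=
  fun a => LinearMap.prod
    ((Mm a).comp (LinearMap.fst k (Y (s a)) (X (s a))) +
      (f a).comp (LinearMap.snd k (Y (s a)) (X (s a))))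
    ((Nm a).comp (LinearMap.snd k (Y (s a)) (X (s a))))

/-- `U` is strong: every deformation `M(λ)`, `λ ∈ U`, is indecomposable. -/
def Strong (Mm : RSp k s t X X) (U : Set (RSp k s t X X)) : Prop :=
  ∀ lam ∈ U, Indec k s t (Mm + lam)

/-- `U` is separating: `M(λ) ≅ M(μ)` implies `λ = μ` for `λ, μ ∈ U`. -/
def Separating (Mm : RSp k s t X X) (U : Set (RSp k s t X X)) : Prop :=
  ∀ lam ∈ U, ∀ mu ∈ U, RIso k s t (Mm + lam) (Mm + mu) → lam = mu

/-- `End(M) = k·id`. -/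
def EndTrivial (Mm : RSp k s t X X) : Prop :=
  ∀ f : ∀ q, X q →ₗ[k] X q, IsRHom k s t Mm Mm f → ∃ c : k, ∀ q, f q = c • LinearMap.id

/-- `Hom(M,N) = 0`. -/
def HomZero (Mm : RSp k s t X X) (Nm : RSp k s t Y Y) : Prop :=
  ∀ f : ∀ q, X q →ₗ[k] Y q, IsRHom k s t Mm Nm f → f = 0

end QuivRep


open QuivRep

variable {k : Type} [Field k] {V A : Type} [Fintype V] [Fintype A] (s t : A → V)
variable {X Y : V → Type}
  [∀ q, AddCommGroup (X q)] [∀ q, Module k (X q)] [∀ q, FiniteDimensional k (X q)]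
  [∀ q, AddCommGroup (Y q)] [∀ q, Module k (Y q)] [∀ q, FiniteDimensional k (Y q)]

/-- `m ⊗ id_{k^d}` : the `d`-fold diagonal of an element of `R(M,M)`, acting on the
vertex spaces `Fin d → Y q` of `M ⊗ k^d`. -/
def piRep (d : ℕ) (m : RSp k s t Y Y) :
    RSp k s t (fun q => Fin d → Y q) (fun q => Fin d → Y q) :=
  fun a => LinearMap.pi (fun j => (m a).comp (LinearMap.proj j))

/-- `Σ_{j} e_{I(j)} ⊗ f_j ∈ R(N, M ⊗ k^d)` for a strictly increasing `I`. -/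
def EI (n d : ℕ) (e : Fin n → RSp k s t X Y) (I : Fin d → Fin n) :
    RSp k s t X (fun q => Fin d → Y q) :=
  fun a => LinearMap.pi (fun j => e (I j) a)

/-- The Schubert cell
`A_I = { Σ_j Σ_{k < I j} a_{j,k} (e_k ⊗ f_j) : a_{j,k} ∈ k, a_{l, I k} = 0 }`. -/
def AI (n d : ℕ) (e : Fin n → RSp k s t X Y) (I : Fin d → Fin n) :
    Set (RSp k s t X (fun q => Fin d → Y q)) :=
  {τ | ∃ c : Fin d → Fin n → k,
    (∀ j k', ¬ k' < I j → c j k' = 0) ∧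
    (∀ j k', k' ∈ Set.range I → c j k' = 0) ∧
    τ = fun a => LinearMap.pi (fun j => ∑ k', c j k' • e k' a)}

theorem Submodule.finrank_prod {k M M' : Type} [Field k] [AddCommGroup M] [Module k M]
    [AddCommGroup M'] [Module k M'] (p : Submodule k M) (p' : Submodule k M')
    [FiniteDimensional k p] [FiniteDimensional k p'] :
    Module.finrank k (p.prod p') = Module.finrank k p + Module.finrank k p' := by
  have h : p.prod p' = LinearMap.range (p.subtype.prodMap p'.subtype) := by
    rw [LinearMap.range_prodMap, Submodule.range_subtype, Submodule.range_subtype]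
  rw [h, LinearMap.finrank_range_of_inj, Module.finrank_prod]
  rw [← LinearMap.ker_eq_bot, LinearMap.ker_prodMap, Submodule.ker_subtype, Submodule.ker_subtype,
    Submodule.prod_bot]

namespace QuivRep

section Blocks

variable {k : Type} [Field k] {V A : Type} {s t : A → V}
  {Z X Y : V → Type}
  [∀ q, AddCommGroup (Z q)] [∀ q, Module k (Z q)]
  [∀ q, AddCommGroup (X q)] [∀ q, Module k (X q)]
  [∀ q, AddCommGroup (Y q)] [∀ q, Module k (Y q)]

theorem IsRHom.comp {P : RSp k s t Z Z} {N : RSp k s t X X} {M : RSp k s t Y Y}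
    {g : ∀ q, X q →ₗ[k] Y q} {f : ∀ q, Z q →ₗ[k] X q}
    (hg : IsRHom k s t N M g) (hf : IsRHom k s t P N f) :
    IsRHom k s t P M (fun q => g q ∘ₗ f q) := by
  intro a
  rw [LinearMap.comp_assoc, hf a, ← LinearMap.comp_assoc, hg a, LinearMap.comp_assoc]

theorem IsRHom.symm_ofBijective {N : RSp k s t X X} {M : RSp k s t Y Y}
    {f : ∀ q, X q →ₗ[k] Y q} (hf : IsRHom k s t N M f) (hb : ∀ q, Function.Bijective (f q)) :
    IsRHom k s t M N (fun q => ((LinearEquiv.ofBijective (f q) (hb q)).symm : Y q →ₗ[k] X q)) := by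
  intro a
  ext y
  apply (hb (t a)).1
  have h := LinearMap.congr_fun (hf a) ((LinearEquiv.ofBijective (f (s a)) (hb (s a))).symm y)
  simp only [LinearMap.comp_apply, LinearEquiv.coe_coe] at h ⊢
  rw [h]
  simp

@[simp]
theorem BExt_apply (P : RSp k s t Z Z) (N : RSp k s t X X) (F : RSp k s t X Z) (a : A)
    (z : Z (s a) × X (s a)) : BExt k s t P N F a z = (P a z.1 + F a z.2, N a z.2) :=
  rfl

variable (φ : ∀ q, (Z q × X q) →ₗ[k] (Z q × X q))

/-- The blocks of `φ = [[φ₁₁, φ₁₂], [φ₂₁, φ₂₂]]` with respect to `Z q × X q`. -/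
def block₁₁ (q : V) : Z q →ₗ[k] Z q := LinearMap.fst k _ _ ∘ₗ φ q ∘ₗ LinearMap.inl k _ _

def block₁₂ (q : V) : X q →ₗ[k] Z q := LinearMap.fst k _ _ ∘ₗ φ q ∘ₗ LinearMap.inr k _ _

def block₂₁ (q : V) : Z q →ₗ[k] X q := LinearMap.snd k _ _ ∘ₗ φ q ∘ₗ LinearMap.inl k _ _

def block₂₂ (q : V) : X q →ₗ[k] X q := LinearMap.snd k _ _ ∘ₗ φ q ∘ₗ LinearMap.inr k _ _

theorem apply_eq_blocks (q : V) (y : Z q) (x : X q) :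
    φ q (y, x) = (block₁₁ φ q y + block₁₂ φ q x, block₂₁ φ q y + block₂₂ φ q x) := by
  have hyx : ((y, x) : Z q × X q) = (y, 0) + (0, x) := by simp
  rw [hyx, map_add]
  rfl

variable {φ} {P P' : RSp k s t Z Z} {N N' : RSp k s t X X} {F F' : RSp k s t X Z}

theorem IsRHom.isRHom_block₂₁ (hφ : IsRHom k s t (BExt k s t P N F) (BExt k s t P' N' F') φ) :
    IsRHom k s t P N' (block₂₁ φ) := by
  intro a
  ext y
  have h := LinearMap.congr_fun (hφ a) (y, 0)
  simp only [LinearMap.comp_apply, BExt_apply, map_zero, add_zero] at h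
  rw [apply_eq_blocks, apply_eq_blocks] at h
  simpa [block₂₁] using congrArg Prod.snd h

theorem IsRHom.isRHom_block₁₁ (hφ : IsRHom k s t (BExt k s t P N F) (BExt k s t P' N' F') φ)
    (h₂₁ : block₂₁ φ = 0) : IsRHom k s t P P' (block₁₁ φ) := by
  intro a
  ext y
  have h := LinearMap.congr_fun (hφ a) (y, 0)
  simp only [LinearMap.comp_apply, BExt_apply, map_zero, add_zero] at h
  rw [apply_eq_blocks, apply_eq_blocks] at h
  simpa [h₂₁] using congrArg Prod.fst h

theorem IsRHom.isRHom_block₂₂ (hφ : IsRHom k s t (BExt k s t P N F) (BExt k s t P' N' F') φ)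
    (h₂₁ : block₂₁ φ = 0) : IsRHom k s t N N' (block₂₂ φ) := by
  intro a
  ext x
  have h := LinearMap.congr_fun (hφ a) (0, x)
  simp only [LinearMap.comp_apply, BExt_apply, map_zero, zero_add] at h
  rw [apply_eq_blocks, apply_eq_blocks] at h
  simpa [h₂₁] using congrArg Prod.snd h

theorem IsRHom.dMap_block₁₂ (hφ : IsRHom k s t (BExt k s t P N F) (BExt k s t P' N' F') φ) :
    dMap k s t N P' (block₁₂ φ) = fun a => F' a ∘ₗ block₂₂ φ (s a) - block₁₁ φ (t a) ∘ₗ F a := by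
  funext a
  ext x
  have h := congrArg Prod.fst (LinearMap.congr_fun (hφ a) (0, x))
  simp only [LinearMap.comp_apply, BExt_apply, map_zero, zero_add] at h
  rw [apply_eq_blocks, apply_eq_blocks] at h
  simp only [map_zero, zero_add] at h
  simp only [dMap, LinearMap.coe_mk, AddHom.coe_mk, LinearMap.sub_apply, LinearMap.comp_apply]
  rw [sub_eq_sub_iff_add_eq_add]
  exact (add_comm _ _).trans (h.trans (add_comm _ _))

theorem bijective_block₁₁ [∀ q, FiniteDimensional k (Z q)] (hb : ∀ q, Function.Bijective (φ q))
    (h₂₁ : block₂₁ φ = 0) (q : V) : Function.Bijective (block₁₁ φ q) := by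
  have hinj : Function.Injective (block₁₁ φ q) := fun y y' hyy' => by
    have h := (hb q).1 (a₁ := (y, 0)) (a₂ := (y', 0)) (by simp [apply_eq_blocks, h₂₁, hyy'])
    exact congrArg Prod.fst h
  exact ⟨hinj, LinearMap.injective_iff_surjective.1 hinj⟩

theorem bijective_block₂₂ [∀ q, FiniteDimensional k (X q)] (hb : ∀ q, Function.Bijective (φ q))
    (h₂₁ : block₂₁ φ = 0) (q : V) : Function.Bijective (block₂₂ φ q) := by
  have hsurj : Function.Surjective (block₂₂ φ q) := fun x => by
    obtain ⟨⟨y', x'⟩, h⟩ := (hb q).2 (0, x)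
    refine ⟨x', ?_⟩
    simpa [apply_eq_blocks, h₂₁] using congrArg Prod.snd h
  exact ⟨LinearMap.injective_iff_surjective.2 hsurj, hsurj⟩

theorem RIso.of_bExt [∀ q, FiniteDimensional k (Z q)] [∀ q, FiniteDimensional k (X q)]
    (hPN : HomZero k s t P N') (h : RIso k s t (BExt k s t P N F) (BExt k s t P' N' F')) :
    RIso k s t P P' ∧ RIso k s t N N' := by
  obtain ⟨φ, hφ, hb⟩ := h
  have h₂₁ : block₂₁ φ = 0 := hPN _ hφ.isRHom_block₂₁
  exact ⟨⟨_, hφ.isRHom_block₁₁ h₂₁, bijective_block₁₁ hb h₂₁⟩,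
    ⟨_, hφ.isRHom_block₂₂ h₂₁, bijective_block₂₂ hb h₂₁⟩⟩

theorem indec_of_isIdempotentElem {M : RSp k s t X X} (hne : ∃ q, ∃ x : X q, x ≠ 0)
    (h : ∀ φ : ∀ q, Module.End k (X q), IsRHom k s t M M φ → IsIdempotentElem φ →
      φ = 0 ∨ φ = 1) :
    Indec k s t M := by
  refine ⟨hne, fun U W hU hW hinf hsup => ?_⟩
  have hUW (q : V) : IsCompl (U q) (W q) := ⟨disjoint_iff.2 (hinf q), codisjoint_iff.2 (hsup q)⟩
  have hπ : IsRHom k s t M M fun q => (U q).projection (W q) (hUW q) := by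
    intro a
    ext z
    have hz : z ∈ U (s a) ⊔ W (s a) := hsup (s a) ▸ Submodule.mem_top
    obtain ⟨u, hu, w, hw, rfl⟩ := Submodule.mem_sup.1 hz
    simp [Submodule.projection_apply_of_mem_left _ hu, Submodule.projection_apply_of_mem_right _ hw,
      Submodule.projection_apply_of_mem_left _ (hU a u hu),
      Submodule.projection_apply_of_mem_right _ (hW a w hw)]
  rcases h _ hπ (funext fun q => Submodule.isIdempotentElem_projection (hUW q)) with h0 | h1
  · refine Or.inl fun q => (Submodule.eq_bot_iff _).2 fun z hz => ?_
    rw [← Submodule.projection_apply_of_mem_left (hUW q) hz, congrFun h0 q]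
    rfl
  · refine Or.inr fun q => (Submodule.eq_bot_iff _).2 fun z hz => ?_
    rw [← Submodule.projection_apply_of_mem_right (hUW q) hz, congrFun h1 q]
    rfl

theorem eq_zero_or_eq_one_of_isIdempotentElem {φ : ∀ q, Module.End k (Z q × X q)}
    (hne : ∃ q, ∃ x : X q, x ≠ 0) {c : k} (h₁₁ : ∀ q, block₁₁ φ q = c • LinearMap.id)
    (h₂₁ : block₂₁ φ = 0) (h₂₂ : ∀ q, block₂₂ φ q = c • LinearMap.id) (hφ : IsIdempotentElem φ) :
    φ = 0 ∨ φ = 1 := by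
  -- `c² = c` forces `c ∈ {0, 1}`, and then `2cβ = β` forces `β = 0`.
  have hform (q : V) (y : Z q) (x : X q) : φ q (y, x) = (c • y + block₁₂ φ q x, c • x) := by
    simp [apply_eq_blocks, h₁₁, h₂₁, h₂₂]
  have hsq (q : V) (x : X q) :
      (c • block₁₂ φ q x + c • block₁₂ φ q x, c • c • x) = (block₁₂ φ q x, c • x) := by
    have h₀ : φ q (0, x) = (block₁₂ φ q x, c • x) := by simpa using hform q 0 x
    have h := LinearMap.congr_fun (congrFun hφ q) (0, x)
    rwa [Pi.mul_apply, Module.End.mul_apply, h₀, hform, map_smul] at h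
  obtain ⟨q₀, x₀, hx₀⟩ := hne
  have hc : c = 0 ∨ c = 1 := by
    refine IsIdempotentElem.iff_eq_zero_or_one.1 (smul_left_injective k hx₀ ?_)
    simpa [mul_smul] using congrArg Prod.snd (hsq q₀ x₀)
  have hβ (q : V) (x : X q) : block₁₂ φ q x = 0 := by
    have h := congrArg Prod.fst (hsq q x)
    rcases hc with rfl | rfl <;> simpa using h.symm
  rcases hc with rfl | rfl
  · exact Or.inl (funext fun q => LinearMap.ext fun ⟨y, x⟩ => by simp [hform, hβ])
  · exact Or.inr (funext fun q => LinearMap.ext fun ⟨y, x⟩ => by simp [hform, hβ])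

theorem indec_bExt {P : RSp k s t Z Z} {N : RSp k s t X X} {F : RSp k s t X Z}
    (hne : ∃ q, ∃ x : X q, x ≠ 0)
    (h : ∀ φ, IsRHom k s t (BExt k s t P N F) (BExt k s t P N F) φ → block₂₁ φ = 0 ∧
      ∃ c : k, (∀ q, block₁₁ φ q = c • LinearMap.id) ∧ ∀ q, block₂₂ φ q = c • LinearMap.id) :
    Indec k s t (BExt k s t P N F) := by
  obtain ⟨q₀, x₀, hx₀⟩ := hne
  refine indec_of_isIdempotentElem ⟨q₀, (0, x₀), fun h => hx₀ (congrArg Prod.snd h)⟩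
    fun φ hφ hidem => ?_
  obtain ⟨h₂₁, c, h₁₁, h₂₂⟩ := h φ hφ
  exact eq_zero_or_eq_one_of_isIdempotentElem ⟨q₀, x₀, hx₀⟩ h₁₁ h₂₁ h₂₂ hidem

end Blocks

section PiRep

variable {k : Type} [Field k] {V A : Type} {s t : A → V} {X Y : V → Type}
  [∀ q, AddCommGroup (X q)] [∀ q, Module k (X q)]
  [∀ q, AddCommGroup (Y q)] [∀ q, Module k (Y q)] {d : ℕ}

theorem isRHom_single_piRep (M : RSp k s t Y Y) (i : Fin d) :
    IsRHom k s t M (piRep s t d M) fun q => LinearMap.single k (fun _ => Y q) i := by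
  intro a
  ext y j
  by_cases hj : j = i
  · subst hj; simp [piRep]
  · simp [piRep, hj]

theorem isRHom_proj_piRep (M : RSp k s t Y Y) (i : Fin d) :
    IsRHom k s t (piRep s t d M) M fun _ => LinearMap.proj i :=
  fun _ => LinearMap.ext fun _ => rfl

theorem HomZero.piRep {M : RSp k s t Y Y} {N : RSp k s t X X} (h : HomZero k s t M N) :
    HomZero k s t (piRep s t d M) N := by
  intro f hf
  funext q
  exact LinearMap.pi_ext' fun i => congrFun (h _ (hf.comp (isRHom_single_piRep M i))) q

theorem EndTrivial.exists_matrix_of_isRHom_piRep {M : RSp k s t Y Y} (hM : EndTrivial k s t M)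
    {α : ∀ q, Module.End k (Fin d → Y q)} (hα : IsRHom k s t (piRep s t d M) (piRep s t d M) α) :
    ∃ C : Matrix (Fin d) (Fin d) k, ∀ q v i, α q v i = ∑ l, C i l • v l := by
  choose C hC using fun i l =>
    hM _ ((isRHom_proj_piRep M i).comp (hα.comp (isRHom_single_piRep M l)))
  refine ⟨C, fun q v i => ?_⟩
  conv_lhs => rw [← Finset.univ_sum_single v, map_sum, Finset.sum_apply]
  exact Finset.sum_congr rfl fun l _ => LinearMap.congr_fun (hC i l q) (v l)

theorem RIso.of_piRep [∀ q, FiniteDimensional k (Y q)] {M M' : RSp k s t Y Y}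
    (hM : EndTrivial k s t M) (hne : ∃ q, ∃ y : Y q, y ≠ 0) (hd : 0 < d)
    (h : RIso k s t (piRep s t d M) (piRep s t d M')) : RIso k s t M M' := by
  -- The components `w_j : M → M'` of the isomorphism and `u_j : M' → M` of its inverse satisfy
  -- `∑ u_j w_j = id`, so some `u_j w_j ∈ End M = k` is nonzero and `w_j` is injective.
  obtain ⟨α, hα, hb⟩ := h
  set i₀ : Fin d := ⟨0, hd⟩
  set β := fun q => (LinearEquiv.ofBijective (α q) (hb q)).symm.toLinearMap
  have hw (j : Fin d) := (isRHom_proj_piRep M' j).comp (hα.comp (isRHom_single_piRep M i₀))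
  have hu (j : Fin d) := (isRHom_proj_piRep M i₀).comp
    ((hα.symm_ofBijective hb).comp (isRHom_single_piRep M' j))
  choose c hc using fun j => hM _ ((hu j).comp (hw j))
  have hcj (j : Fin d) (q : V) (y : Y q) :
      β q (Pi.single j (α q (Pi.single i₀ y) j)) i₀ = c j • y :=
    LinearMap.congr_fun (hc j q) y
  obtain ⟨q₀, y₀, hy₀⟩ := hne
  have hsum : (∑ j, c j) • y₀ = y₀ := by
    simp_rw [Finset.sum_smul, ← hcj]
    rw [← Finset.sum_apply, ← map_sum, Finset.univ_sum_single]
    simp [β]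
  obtain ⟨j, hj⟩ : ∃ j, c j ≠ 0 := by
    by_contra! h0
    simp [h0, eq_comm, hy₀] at hsum
  refine ⟨_, hw j, fun q => ?_⟩
  have hinj : Function.Injective fun y : Y q => α q (Pi.single i₀ y) j := fun y y' hyy' =>
    smul_right_injective _ hj <| by
      simp only [← hcj]
      exact congrArg (fun z => β q (Pi.single j z) i₀) hyy'
  exact ⟨hinj, LinearMap.injective_iff_surjective.1 hinj⟩

end PiRep

section SchubertForm

variable {k : Type} [Field k] {d d' n : ℕ}

/-- Normal form of the points of the Schubert cell of `I`; the pivot of row `l` is its last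
nonzero entry. -/
structure IsSchubertForm (I : Fin d → Fin n) (P : Matrix (Fin d) (Fin n) k) : Prop where
  apply_pivot : ∀ l m, P l (I m) = (1 : Matrix (Fin d) (Fin d) k) l m
  apply_eq_zero_of_lt : ∀ l m, I l < m → P l m = 0

variable {I I' : Fin d → Fin n} {P P' : Matrix (Fin d) (Fin n) k}

theorem IsSchubertForm.mul_apply_pivot (hP : IsSchubertForm I P) (C : Matrix (Fin d') (Fin d) k)
    (j : Fin d') (m : Fin d) : (C * P) j (I m) = C j m := by
  simp [Matrix.mul_apply, hP.apply_pivot, Matrix.one_apply]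

theorem IsSchubertForm.eq_smul_one_of_mul_eq_smul (hP : IsSchubertForm I P)
    (hP' : IsSchubertForm I P') {C : Matrix (Fin d) (Fin d) k} {c : k} (h : C * P = c • P') :
    C = c • 1 := by
  ext j m
  rw [← hP.mul_apply_pivot C, h, Matrix.smul_apply, hP'.apply_pivot, Matrix.smul_apply]

theorem IsSchubertForm.range_subset_of_mul_eq_smul (hP : IsSchubertForm I P)
    (hP' : IsSchubertForm I' P') {C : Matrix (Fin d) (Fin d) k} {c : k} (hc : c ≠ 0)
    (h : C * P = c • P') : Set.range I' ⊆ Set.range I := by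
  -- Pick `l` with `C j l * P l (I' j) ≠ 0`; then `I' j ≤ I l` since `P l (I' j) ≠ 0`, and
  -- `I l ≤ I' j` since `c P' j (I l) = C j l ≠ 0`.
  rintro _ ⟨j, rfl⟩
  have hj : (C * P) j (I' j) ≠ 0 := by simp [h, hP'.apply_pivot, hc]
  rw [Matrix.mul_apply] at hj
  obtain ⟨l, -, hl⟩ := Finset.exists_ne_zero_of_sum_ne_zero hj
  have hle : I' j ≤ I l :=
    not_lt.1 fun hlt => right_ne_zero_of_mul hl (hP.apply_eq_zero_of_lt _ _ hlt)
  have hge : I l ≤ I' j := not_lt.1 fun hlt => left_ne_zero_of_mul hl <| by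
    rw [← hP.mul_apply_pivot C, h, Matrix.smul_apply, hP'.apply_eq_zero_of_lt _ _ hlt, smul_zero]
  exact ⟨l, le_antisymm hge hle⟩

theorem IsSchubertForm.eq_of_mul_eq_smul (hI : StrictMono I) (hI' : StrictMono I')
    (hP : IsSchubertForm I P) (hP' : IsSchubertForm I' P') {C : Matrix (Fin d) (Fin d) k} {c : k}
    (hc : c ≠ 0) (h : C * P = c • P') : I = I' ∧ P = P' := by
  have hrange : Set.range I' = Set.range I :=
    Set.eq_of_subset_of_ncard_le (hP.range_subset_of_mul_eq_smul hP' hc h)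
      (by rw [Set.ncard_range_of_injective hI.injective,
        Set.ncard_range_of_injective hI'.injective])
      (Set.finite_range I)
  obtain rfl := ((StrictMono.range_inj hI hI').1 hrange.symm)
  refine ⟨rfl, smul_right_injective _ hc ?_⟩
  change c • P = c • P'
  rw [← h, hP.eq_smul_one_of_mul_eq_smul hP' h, Matrix.smul_mul, Matrix.one_mul]

end SchubertForm

section MatrixRep

variable {k : Type} [Field k] {V A : Type} {s t : A → V} {X Y : V → Type}
  [∀ q, AddCommGroup (X q)] [∀ q, Module k (X q)]
  [∀ q, AddCommGroup (Y q)] [∀ q, Module k (Y q)] {n d : ℕ}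

/-- `P ↦ Σ_{j,m} P j m • (e m ⊗ f_j) ∈ R(N, M ⊗ k^d)`. -/
def matrixRep (e : Fin n → RSp k s t X Y) (d : ℕ) :
    Matrix (Fin d) (Fin n) k →ₗ[k] RSp k s t X (fun q => Fin d → Y q) where
  toFun P a := LinearMap.pi fun j => ∑ m, P j m • e m a
  map_add' P P' := by
    funext a
    ext x j
    simp [add_smul, Finset.sum_add_distrib]
  map_smul' c P := by
    funext a
    ext x j
    simp [mul_smul, Finset.smul_sum]

theorem matrixRep_apply (e : Fin n → RSp k s t X Y) (P : Matrix (Fin d) (Fin n) k) (a : A)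
    (x : X (s a)) (j : Fin d) :
    matrixRep e d P a x j = Fintype.linearCombination k e (P j) a x := by
  simp [matrixRep, Fintype.linearCombination_apply]

def schubertCoeffs (I : Fin d → Fin n) : Submodule k (Matrix (Fin d) (Fin n) k) where
  carrier := {c | (∀ j m, ¬ m < I j → c j m = 0) ∧ ∀ j m, m ∈ Set.range I → c j m = 0}
  add_mem' ha hb := ⟨fun j m h => by simp [ha.1 j m h, hb.1 j m h],
    fun j m h => by simp [ha.2 j m h, hb.2 j m h]⟩
  zero_mem' := ⟨fun _ _ _ => rfl, fun _ _ _ => rfl⟩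
  smul_mem' c _ ha := ⟨fun j m h => by simp [ha.1 j m h], fun j m h => by simp [ha.2 j m h]⟩

variable {e : Fin n → RSp k s t X Y} {I : Fin d → Fin n}

theorem coe_map_schubertCoeffs :
    ((schubertCoeffs I).map (matrixRep e d) : Set _) = AI s t n d e I := by
  ext τ
  symm
  constructor
  · rintro ⟨c, h₁, h₂, rfl⟩
    exact ⟨c, ⟨h₁, h₂⟩, rfl⟩
  · rintro ⟨c, ⟨h₁, h₂⟩, rfl⟩
    exact ⟨c, h₁, h₂, rfl⟩

theorem EI_eq_matrixRep :
    EI s t n d e I = matrixRep e d ((1 : Matrix (Fin n) (Fin n) k).submatrix I id) := by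
  funext a
  ext x j
  simp [EI, matrixRep, Matrix.one_apply]

theorem isSchubertForm_one_submatrix_add (hI : Function.Injective I)
    {c : Matrix (Fin d) (Fin n) k} (hc : c ∈ schubertCoeffs I) :
    IsSchubertForm I ((1 : Matrix (Fin n) (Fin n) k).submatrix I id + c) where
  apply_pivot l m := by simp [Matrix.one_apply, hI.eq_iff, hc.2 l (I m) ⟨m, rfl⟩]
  apply_eq_zero_of_lt l m h := by simp [h.ne, hc.1 l m h.not_gt]

theorem exists_isSchubertForm_of_mem_AI (hI : Function.Injective I)
    {τ : RSp k s t X (fun q => Fin d → Y q)} (hτ : τ ∈ AI s t n d e I) :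
    ∃ P, IsSchubertForm I P ∧ EI s t n d e I + τ = matrixRep e d P := by
  rw [← coe_map_schubertCoeffs] at hτ
  obtain ⟨c, hc, rfl⟩ := hτ
  exact ⟨_, isSchubertForm_one_submatrix_add hI hc, by rw [EI_eq_matrixRep, map_add]⟩

end MatrixRep

section Cells

variable {k : Type} [Field k] {V A : Type} {s t : A → V} {X Y : V → Type}
  [∀ q, AddCommGroup (X q)] [∀ q, Module k (X q)]
  [∀ q, AddCommGroup (Y q)] [∀ q, Module k (Y q)] {n d : ℕ} {e : Fin n → RSp k s t X Y}
  {M : RSp k s t Y Y} {N : RSp k s t X X} {UNM : Submodule k (RSp k s t X Y)}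

theorem IsRHom.mul_eq_smul_of_bExt_matrixRep
    (huniv : ∀ τ ∈ UNM, ∀ τ' ∈ UNM, τ - τ' ∈ LinearMap.range (dMap k s t N M) → τ = τ')
    (he : LinearIndependent k e) (hspan : Submodule.span k (Set.range e) = UNM)
    (hM : EndTrivial k s t M) (hN : EndTrivial k s t N) (hMN : HomZero k s t M N)
    {P P' : Matrix (Fin d) (Fin n) k}
    {φ : ∀ q, ((Fin d → Y q) × X q) →ₗ[k] ((Fin d → Y q) × X q)}
    (hφ : IsRHom k s t (BExt k s t (piRep s t d M) N (matrixRep e d P))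
      (BExt k s t (piRep s t d M) N (matrixRep e d P')) φ) :
    block₂₁ φ = 0 ∧ ∃ (C : Matrix (Fin d) (Fin d) k) (c : k),
      (∀ q v i, block₁₁ φ q v i = ∑ l, C i l • v l) ∧ (∀ q, block₂₂ φ q = c • LinearMap.id) ∧
      C * P = c • P' := by
  have h₂₁ : block₂₁ φ = 0 := hMN.piRep _ hφ.isRHom_block₂₁
  obtain ⟨C, hC⟩ := hM.exists_matrix_of_isRHom_piRep (hφ.isRHom_block₁₁ h₂₁)
  obtain ⟨c, hc⟩ := hN _ (hφ.isRHom_block₂₂ h₂₁)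
  refine ⟨h₂₁, C, c, hC, hc, funext fun j => he.fintypeLinearCombination_injective ?_⟩
  have hmem (v : Fin n → k) : Fintype.linearCombination k e v ∈ UNM :=
    hspan ▸ Fintype.range_linearCombination k e ▸ LinearMap.mem_range_self _ v
  have hrow : (C * P) j = ∑ l, C j l • P l := by
    ext m
    simp [Matrix.mul_apply, Finset.sum_apply]
  -- row `j` of `c F' - C F` is the coboundary of row `j` of `φ₁₂`, hence zero by universality
  refine (huniv _ (hmem _) _ (hmem _) ⟨fun q => LinearMap.proj j ∘ₗ block₁₂ φ q, ?_⟩).symm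
  funext a
  ext x
  have h := congrArg (fun f => f a x j) hφ.dMap_block₁₂
  refine h.trans ?_
  simp [hrow, show (c • P') j = c • P' j from rfl, hC, hc, matrixRep_apply, Finset.sum_apply]

theorem indec_bExt_matrixRep
    (huniv : ∀ τ ∈ UNM, ∀ τ' ∈ UNM, τ - τ' ∈ LinearMap.range (dMap k s t N M) → τ = τ')
    (he : LinearIndependent k e) (hspan : Submodule.span k (Set.range e) = UNM)
    (hM : EndTrivial k s t M) (hN : EndTrivial k s t N) (hMN : HomZero k s t M N)
    (hne : ∃ q, ∃ x : X q, x ≠ 0) {I : Fin d → Fin n} {P : Matrix (Fin d) (Fin n) k}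
    (hP : IsSchubertForm I P) :
    Indec k s t (BExt k s t (piRep s t d M) N (matrixRep e d P)) := by
  refine indec_bExt hne fun φ hφ => ?_
  obtain ⟨h₂₁, C, c, hC, hc, hCP⟩ := hφ.mul_eq_smul_of_bExt_matrixRep huniv he hspan hM hN hMN
  obtain rfl := hP.eq_smul_one_of_mul_eq_smul hP hCP
  refine ⟨h₂₁, c, fun q => ?_, hc⟩
  ext v i
  simp [hC, Matrix.one_apply]

theorem eq_of_rIso_bExt_matrixRep
    (huniv : ∀ τ ∈ UNM, ∀ τ' ∈ UNM, τ - τ' ∈ LinearMap.range (dMap k s t N M) → τ = τ')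
    (he : LinearIndependent k e) (hspan : Submodule.span k (Set.range e) = UNM)
    (hM : EndTrivial k s t M) (hN : EndTrivial k s t N) (hMN : HomZero k s t M N)
    (hne : ∃ q, ∃ x : X q, x ≠ 0) {I I' : Fin d → Fin n} (hI : StrictMono I) (hI' : StrictMono I')
    {P P' : Matrix (Fin d) (Fin n) k} (hP : IsSchubertForm I P) (hP' : IsSchubertForm I' P')
    (h : RIso k s t (BExt k s t (piRep s t d M) N (matrixRep e d P))
      (BExt k s t (piRep s t d M) N (matrixRep e d P'))) :
    I = I' ∧ P = P' := by
  obtain ⟨φ, hφ, hb⟩ := h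
  obtain ⟨h₂₁, C, c, -, hc, hCP⟩ := hφ.mul_eq_smul_of_bExt_matrixRep huniv he hspan hM hN hMN
  obtain ⟨q₀, x₀, hx₀⟩ := hne
  have hc0 : c ≠ 0 := by
    rintro rfl
    obtain ⟨⟨y, x⟩, hyx⟩ := (hb q₀).2 (0, x₀)
    exact hx₀ (by simpa [apply_eq_blocks, h₂₁, hc, eq_comm] using congrArg Prod.snd hyx)
  exact hP.eq_of_mul_eq_smul hI hI' hP' hc0 hCP

end Cells

section Dimension

variable {k : Type} [Field k] {V A : Type} {s t : A → V} {X Y : V → Type}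
  [∀ q, AddCommGroup (X q)] [∀ q, Module k (X q)]
  [∀ q, AddCommGroup (Y q)] [∀ q, Module k (Y q)] {n d : ℕ}

variable (s t d) in
def piRepₗ : RSp k s t Y Y →ₗ[k] RSp k s t (fun q => Fin d → Y q) (fun q => Fin d → Y q) where
  toFun := piRep s t d
  map_add' _ _ := rfl
  map_smul' _ _ := rfl

@[simp]
theorem piRepₗ_apply (m : RSp k s t Y Y) : piRepₗ s t d m = piRep s t d m :=
  rfl

theorem piRepₗ_injective (hd : 0 < d) : Function.Injective (piRepₗ (k := k) (Y := Y) s t d) :=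
  fun _ _ h => funext fun a => LinearMap.ext fun y =>
    congrFun (LinearMap.congr_fun (congrFun h a) fun _ => y) ⟨0, hd⟩

theorem exists_cell_finrank [Finite A] [∀ q, FiniteDimensional k (X q)]
    [∀ q, FiniteDimensional k (Y q)] (UM : Submodule k (RSp k s t Y Y))
    (UN : Submodule k (RSp k s t X X)) (e : Fin n → RSp k s t X Y) (hd : 0 < d)
    (I : Fin d → Fin n) :
    ∃ WI : Submodule k (RSp k s t X (fun q => Fin d → Y q)),
    ∃ P : Submodule k ((RSp k s t X (fun q => Fin d → Y q)) ×
        (RSp k s t (fun q => Fin d → Y q) (fun q => Fin d → Y q)) × (RSp k s t X X)),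
      (WI : Set _) = AI s t n d e I ∧
      (P : Set ((RSp k s t X (fun q => Fin d → Y q)) ×
          (RSp k s t (fun q => Fin d → Y q) (fun q => Fin d → Y q)) × (RSp k s t X X))) =
        {p | p.1 ∈ AI s t n d e I ∧ (∃ lam ∈ UM, p.2.1 = piRep s t d lam) ∧
          p.2.2 ∈ UN} ∧
      Module.finrank k P = Module.finrank k UM + Module.finrank k UN + Module.finrank k WI := by
  refine ⟨_, ((schubertCoeffs I).map (matrixRep e d)).prod ((UM.map (piRepₗ s t d)).prod UN),
    coe_map_schubertCoeffs, ?_, ?_⟩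
  · ext ⟨τ, m, μ⟩
    simp [← coe_map_schubertCoeffs, eq_comm]
  · rw [Submodule.finrank_prod, Submodule.finrank_prod,
      (Submodule.equivMapOfInjective _ (piRepₗ_injective hd) UM).finrank_eq.symm]
    ring

end Dimension

end QuivRep

theorem statement6
    (Mm : RSp k s t Y Y) (Nm : RSp k s t X X)
    (UM : Submodule k (RSp k s t Y Y)) (UN : Submodule k (RSp k s t X X))
    -- (M, U_M) is a cell of Schurian representations
    (hStrongM : Strong k s t Mm UM) (hSepM : Separating k s t Mm UM)
    (hSchurM : ∀ lam ∈ UM, EndTrivial k s t (Mm + lam))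
    -- (N, U_N) is a cell of Schurian representations
    (hStrongN : Strong k s t Nm UN) (hSepN : Separating k s t Nm UN)
    (hSchurN : ∀ mu ∈ UN, EndTrivial k s t (Nm + mu))
    -- Hom(M(λ), N(μ)) = 0
    (hHom : ∀ lam ∈ UM, ∀ mu ∈ UN, HomZero k s t (Mm + lam) (Nm + mu))
    -- U_{N,M} universal for (U_M, U_N), with basis e_1, …, e_n
    (UNM : Submodule k (RSp k s t X Y))
    (huniv : ∀ lam ∈ UM, ∀ mu ∈ UN, ∀ tau ∈ UNM, ∀ tau' ∈ UNM,
      tau - tau' ∈ LinearMap.range (dMap k s t (Nm + mu) (Mm + lam)) → tau = tau')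
    (n : ℕ) (e : Fin n → RSp k s t X Y)
    (hbasis : LinearIndependent k e ∧ Submodule.span k (Set.range e) = UNM)
    (d : ℕ) (hd : 1 ≤ d) :
    -- (1) indecomposability
    (∀ I : Fin d → Fin n, StrictMono I →
      ∀ tau ∈ AI s t n d e I, ∀ lam ∈ UM, ∀ mu ∈ UN,
        Indec k s t (BExt k s t (piRep s t d (Mm + lam)) (Nm + mu)
          (EI s t n d e I + tau))) ∧
    -- (2) parameters (and the index I) are determined by the isomorphism class
    (∀ I I' : Fin d → Fin n, StrictMono I → StrictMono I' →
      ∀ tau ∈ AI s t n d e I, ∀ lam ∈ UM, ∀ mu ∈ UN,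
      ∀ tau' ∈ AI s t n d e I', ∀ lam' ∈ UM, ∀ mu' ∈ UN,
        RIso k s t (BExt k s t (piRep s t d (Mm + lam)) (Nm + mu)
            (EI s t n d e I + tau))
          (BExt k s t (piRep s t d (Mm + lam')) (Nm + mu')
            (EI s t n d e I' + tau')) →
        I = I' ∧ tau = tau' ∧ lam = lam' ∧ mu = mu') ∧
    -- (3) the dimension of the cell C_I
    (∀ I : Fin d → Fin n, StrictMono I →
      ∃ WI : Submodule k (RSp k s t X (fun q => Fin d → Y q)),
      ∃ P : Submodule k ((RSp k s t X (fun q => Fin d → Y q)) ×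
        (RSp k s t (fun q => Fin d → Y q) (fun q => Fin d → Y q)) × (RSp k s t X X)),
        (WI : Set _) = AI s t n d e I ∧
        (P : Set ((RSp k s t X (fun q => Fin d → Y q)) ×
            (RSp k s t (fun q => Fin d → Y q) (fun q => Fin d → Y q)) ×
            (RSp k s t X X))) = {p | p.1 ∈ AI s t n d e I ∧
          (∃ lam ∈ UM, p.2.1 = piRep s t d lam) ∧ p.2.2 ∈ UN} ∧
        Module.finrank k P =
          Module.finrank k UM + Module.finrank k UN + Module.finrank k WI) := by
  refine ⟨fun I hI τ hτ lam hlam mu hmu => ?_,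
    fun I I' hI hI' τ hτ lam hlam mu hmu τ' hτ' lam' hlam' mu' hmu' hiso => ?_,
    fun I _ => exists_cell_finrank UM UN e hd I⟩
  · obtain ⟨P, hP, hEP⟩ := exists_isSchubertForm_of_mem_AI hI.injective hτ
    rw [hEP]
    exact indec_bExt_matrixRep (huniv lam hlam mu hmu) hbasis.1 hbasis.2 (hSchurM lam hlam)
      (hSchurN mu hmu) (hHom lam hlam mu hmu) (hStrongN mu hmu).1 hP
  · obtain ⟨hMiso, hNiso⟩ := RIso.of_bExt (hHom lam hlam mu' hmu').piRep hiso
    obtain rfl := hSepN mu hmu mu' hmu' hNiso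
    obtain rfl := hSepM lam hlam lam' hlam'
      (RIso.of_piRep (hSchurM lam hlam) (hStrongM lam hlam).1 hd hMiso)
    obtain ⟨P, hP, hEP⟩ := exists_isSchubertForm_of_mem_AI hI.injective hτ
    obtain ⟨P', hP', hEP'⟩ := exists_isSchubertForm_of_mem_AI hI'.injective hτ'
    rw [hEP, hEP'] at hiso
    obtain ⟨rfl, rfl⟩ := eq_of_rIso_bExt_matrixRep (huniv lam hlam mu hmu) hbasis.1 hbasis.2
      (hSchurM lam hlam) (hSchurN mu hmu) (hHom lam hlam mu hmu) (hStrongN mu hmu).1 hI hI' hP hP'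
      hiso
    exact ⟨rfl, add_left_cancel (hEP.trans hEP'.symm), rfl, rfl⟩
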